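/- If G is a K_{1,3}-free (claw-free) graph, then i(G) = γ(G). -/

import Mathlib

open SimpleGraph

variable {V : Type*}

/-- The closed neighborhood `N[S]` of a set of vertices. -/
def closedNbhd (G : SimpleGraph V) (S : Set V) : Set V :=
  {v | v ∈ S ∨ ∃ u ∈ S, G.Adj u v}

/-- The open neighborhood `N(S)` of a set of vertices. -/
def openNbhd (G : SimpleGraph V) (S : Set V) : Set V :=
  {v | ∃ u ∈ S, G.Adj u v}

/-- A set is independent if no two of its vertices are adjacent. -/
def IsIndep (G : SimpleGraph V) (S : Set V) : Prop :=
  S.Pairwise fun u w => ¬ G.Adj u w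

/-- `S` is `K_k`-isolating: `G - N[S]` contains no clique of size `k`. -/
def IsIsolating (G : SimpleGraph V) (k : ℕ) (S : Set V) : Prop :=
  ∀ T : Finset V, (↑T : Set V) ∩ closedNbhd G S = ∅ → G.IsClique ↑T → T.card ≠ k

/-- The `K_k`-isolation number `ι_k(G)`. -/
noncomputable def iota [Fintype V] (G : SimpleGraph V) (k : ℕ) : ℕ :=
  sInf {n | ∃ S : Finset V, S.card = n ∧ IsIsolating G k ↑S}

/-- The independent `K_k`-isolation number `ι'_k(G)`. -/
noncomputable def iota' [Fintype V] (G : SimpleGraph V) (k : ℕ) : ℕ :=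
  sInf {n | ∃ S : Finset V, S.card = n ∧ IsIsolating G k ↑S ∧ IsIndep G ↑S}

/-- A dominating set: every vertex lies in `N[S]`. -/
def IsDominating (G : SimpleGraph V) (S : Set V) : Prop :=
  ∀ v, v ∈ closedNbhd G S

/-- The domination number `γ(G)`. -/
noncomputable def gammaNum [Fintype V] (G : SimpleGraph V) : ℕ :=
  sInf {n | ∃ S : Finset V, S.card = n ∧ IsDominating G ↑S}

/-- The independent domination number `i(G)`. -/
noncomputable def iNum [Fintype V] (G : SimpleGraph V) : ℕ :=
  sInf {n | ∃ S : Finset V, S.card = n ∧ IsDominating G ↑S ∧ IsIndep G ↑S}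

/-- `G` is `K_{1,r}`-free: no induced subgraph isomorphic to the star `K_{1,r}`. -/
def K1rFree (G : SimpleGraph V) (r : ℕ) : Prop :=
  IsEmpty (completeBipartiteGraph (Fin 1) (Fin r) ↪g G)

/-- Degree of `v` inside the vertex subset `T`. -/
def degIn [DecidableEq V] (G : SimpleGraph V) [DecidableRel G.Adj] (T : Finset V) (v : V) : ℕ :=
  (T.filter (G.Adj v)).card

/-!
Let `D` be a dominating set of a claw-free graph containing two adjacent vertices `u` and `v`.
If `D \ {v}` is not dominating, `v` has private neighbours, i.e. vertices dominated by `v` alone.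
They form a clique, since two non-adjacent ones would form a claw centred at `v` together with `u`,
so exchanging `v` for any one of them yields a dominating set of no larger size with fewer
adjacent pairs. Repeating this turns a minimum dominating set into an independent one.
-/

section

variable {G : SimpleGraph V}

theorem K1rFree.adj_of_not_adj (hG : K1rFree G 3) {v a b c : V}
    (ha : G.Adj v a) (hb : G.Adj v b) (hc : G.Adj v c) (hab : a ≠ b) (hac : a ≠ c) (hbc : b ≠ c)
    (hnab : ¬G.Adj a b) (hnac : ¬G.Adj a c) : G.Adj b c := by
  by_contra hnbc
  have hva := G.ne_of_adj ha
  have hvb := G.ne_of_adj hb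
  have hvc := G.ne_of_adj hc
  let claw : Fin 1 ⊕ Fin 3 → V := Sum.elim (fun _ => v) ![a, b, c]
  have hinj : claw.Injective := by
    rintro (x | x) (y | y) h
    · simp [Fin.eq_zero x, Fin.eq_zero y]
    all_goals fin_cases x <;> try fin_cases y
    all_goals simp_all [claw, eq_comm]
  refine hG.false ⟨⟨claw, hinj⟩, fun {x y} => ?_⟩
  change G.Adj (claw x) (claw y) ↔ _
  rcases x with x | x <;> rcases y with y | y
  all_goals fin_cases x <;> fin_cases y
  all_goals simp_all [claw, completeBipartiteGraph, adj_comm]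

theorem closedNbhd_mono {S T : Set V} (h : S ⊆ T) : closedNbhd G S ⊆ closedNbhd G T := by
  rintro p (hp | ⟨u, hu, hup⟩)
  exacts [Or.inl (h hp), Or.inr ⟨u, h hu, hup⟩]

theorem not_adj_of_notMem_closedNbhd {S : Set V} {p w : V} (hp : p ∉ closedNbhd G S)
    (hw : w ∈ S) : ¬G.Adj w p :=
  fun h => hp (Or.inr ⟨w, hw, h⟩)

theorem adj_of_notMem_closedNbhd_diff {S : Set V} {v p : V} (hp : p ∈ closedNbhd G S)
    (hp' : p ∉ closedNbhd G (S \ {v})) (hpv : p ≠ v) : G.Adj v p := by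
  rcases hp with hp | ⟨w, hw, hwp⟩
  · exact absurd (Or.inl ⟨hp, hpv⟩) hp'
  · obtain rfl : w = v := by_contra fun hwv => hp' (Or.inr ⟨w, ⟨hw, hwv⟩, hwp⟩)
    exact hwp

theorem IsDominating.insert_diff (hG : K1rFree G 3) {D : Set V} (hD : IsDominating G D)
    {u v x : V} (hu : u ∈ D) (huv : G.Adj u v) (hx : x ∉ closedNbhd G (D \ {v})) :
    IsDominating G (insert x (D \ {v})) := by
  have hu' : u ∈ D \ {v} := ⟨hu, G.ne_of_adj huv⟩
  have hxv : x ≠ v := by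
    rintro rfl
    exact hx (Or.inr ⟨u, hu', huv⟩)
  have hux : u ≠ x := by
    rintro rfl
    exact hx (Or.inl hu')
  intro p
  by_cases hp : p ∈ closedNbhd G (D \ {v})
  · exact closedNbhd_mono (Set.subset_insert _ _) hp
  by_cases hpv : p = v
  · exact Or.inr ⟨u, Or.inr hu', hpv ▸ huv⟩
  by_cases hpx : p = x
  · exact Or.inl (hpx ▸ Set.mem_insert _ _)
  refine Or.inr ⟨x, Set.mem_insert _ _, ?_⟩
  -- `x` and `p` are both private neighbours of `v`; `{v, u, x, p}` is not a claw
  exact hG.adj_of_not_adj huv.symm (adj_of_notMem_closedNbhd_diff (hD x) hx hxv)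
    (adj_of_notMem_closedNbhd_diff (hD p) hp hpv) hux (fun h => hp (Or.inl (h ▸ hu')))
    (Ne.symm hpx) (not_adj_of_notMem_closedNbhd hx hu') (not_adj_of_notMem_closedNbhd hp hu')

end

namespace SimpleGraph

variable (G : SimpleGraph V) [DecidableRel G.Adj]

def adjPairs (D : Finset V) : Finset (V × V) :=
  (D ×ˢ D).filter fun p => G.Adj p.1 p.2

variable {G}

theorem adjPairs_mono {D D' : Finset V} (h : D ⊆ D') : G.adjPairs D ⊆ G.adjPairs D' :=
  Finset.filter_subset_filter _ (Finset.product_subset_product h h)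

theorem adjPairs_erase_ssubset [DecidableEq V] {D : Finset V} {u v : V} (hu : u ∈ D) (hv : v ∈ D)
    (huv : G.Adj u v) : G.adjPairs (D.erase v) ⊂ G.adjPairs D := by
  refine (Finset.ssubset_iff_of_subset (adjPairs_mono (Finset.erase_subset v D))).2
    ⟨(u, v), ?_, ?_⟩ <;> simp [adjPairs, hu, hv, huv]

theorem adjPairs_insert_of_forall_not_adj [DecidableEq V] {D : Finset V} {x : V}
    (hx : ∀ w ∈ D, ¬G.Adj w x) : G.adjPairs (insert x D) = G.adjPairs D := by
  ext ⟨a, b⟩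
  simp only [adjPairs, Finset.mem_filter, Finset.mem_product, Finset.mem_insert]
  constructor
  · rintro ⟨⟨rfl | ha, rfl | hb⟩, hab⟩
    · exact absurd hab G.irrefl
    · exact absurd hab.symm (hx b hb)
    · exact absurd hab (hx a ha)
    · exact ⟨⟨ha, hb⟩, hab⟩
  · rintro ⟨⟨ha, hb⟩, hab⟩
    exact ⟨⟨Or.inr ha, Or.inr hb⟩, hab⟩

end SimpleGraph

section

variable {G : SimpleGraph V} [DecidableEq V] [DecidableRel G.Adj]

theorem IsDominating.exists_adjPairs_ssubset (hG : K1rFree G 3) {D : Finset V}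
    (hD : IsDominating G ↑D) {u v : V} (hu : u ∈ D) (hv : v ∈ D) (huv : G.Adj u v) :
    ∃ D' : Finset V, IsDominating G ↑D' ∧ D'.card ≤ D.card ∧ G.adjPairs D' ⊂ G.adjPairs D := by
  have hlt := adjPairs_erase_ssubset hu hv huv
  by_cases hdom : IsDominating G ↑(D.erase v)
  · exact ⟨D.erase v, hdom, Finset.card_erase_le, hlt⟩
  obtain ⟨x, hx⟩ := not_forall.mp hdom
  rw [Finset.coe_erase] at hx
  refine ⟨insert x (D.erase v), ?_, ?_, ?_⟩
  · rw [Finset.coe_insert, Finset.coe_erase]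
    exact hD.insert_diff hG hu huv hx
  · exact (Finset.card_insert_le _ _).trans (Finset.card_erase_add_one hv).le
  · rw [adjPairs_insert_of_forall_not_adj fun w hw => not_adj_of_notMem_closedNbhd hx ?_]
    · exact hlt
    · rwa [← Finset.coe_erase]

theorem IsDominating.exists_isIndep_card_le (hG : K1rFree G 3) {D : Finset V}
    (hD : IsDominating G ↑D) : ∃ I : Finset V, IsDominating G ↑I ∧ IsIndep G ↑I ∧ I.card ≤ D.card := by
  by_cases hind : IsIndep G ↑D
  · exact ⟨D, hD, hind, le_rfl⟩
  obtain ⟨u, hu, v, hv, -, huv⟩ : ∃ u ∈ D, ∃ v ∈ D, u ≠ v ∧ G.Adj u v := by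
    simpa [IsIndep, Set.Pairwise] using hind
  obtain ⟨D', hD', hcard, hlt⟩ := hD.exists_adjPairs_ssubset hG hu hv huv
  obtain ⟨I, hI, hIind, hIcard⟩ := hD'.exists_isIndep_card_le hG
  exact ⟨I, hI, hIind, hIcard.trans hcard⟩
termination_by (G.adjPairs D).card
decreasing_by exact Finset.card_lt_card hlt

end

section

variable [Fintype V] {G : SimpleGraph V}

theorem gammaNum_le_card {S : Finset V} (hS : IsDominating G ↑S) : gammaNum G ≤ S.card :=
  Nat.sInf_le ⟨S, rfl, hS⟩

theorem iNum_le_card {S : Finset V} (hS : IsDominating G ↑S) (hS' : IsIndep G ↑S) :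
    iNum G ≤ S.card :=
  Nat.sInf_le ⟨S, rfl, hS, hS'⟩

theorem exists_isDominating_card_eq_gammaNum (G : SimpleGraph V) :
    ∃ S : Finset V, IsDominating G ↑S ∧ S.card = gammaNum G := by
  have univ_dom : IsDominating G ↑(Finset.univ : Finset V) := fun v => Or.inl (by simp)
  obtain ⟨S, hS, hdom⟩ : gammaNum G ∈ {n | ∃ S : Finset V, S.card = n ∧ IsDominating G ↑S} :=
    Nat.sInf_mem ⟨_, Finset.univ, rfl, univ_dom⟩
  exact ⟨S, hdom, hS⟩

theorem exists_isDominating_isIndep_card_eq_iNum {S : Finset V} (hS : IsDominating G ↑S)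
    (hS' : IsIndep G ↑S) : ∃ I : Finset V, IsDominating G ↑I ∧ IsIndep G ↑I ∧ I.card = iNum G := by
  obtain ⟨I, hI, hdom, hind⟩ :
      iNum G ∈ {n | ∃ S : Finset V, S.card = n ∧ IsDominating G ↑S ∧ IsIndep G ↑S} :=
    Nat.sInf_mem ⟨_, S, rfl, hS, hS'⟩
  exact ⟨I, hdom, hind, hI⟩

end

/-- For claw-free graphs, i(G) = γ(G). -/
theorem stmt_5 [Fintype V] (G : SimpleGraph V) (hfree : K1rFree G 3) :
    iNum G = gammaNum G := by
  classical
  obtain ⟨D, hD, hDcard⟩ := exists_isDominating_card_eq_gammaNum G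
  obtain ⟨I, hI, hIind, hIcard⟩ := hD.exists_isIndep_card_le hfree
  obtain ⟨J, hJ, -, hJcard⟩ := exists_isDominating_isIndep_card_eq_iNum hI hIind
  refine le_antisymm ?_ ?_
  · exact (iNum_le_card hI hIind).trans (hIcard.trans hDcard.le)
  · exact hJcard ▸ gammaNum_le_card hJ
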